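/- Let (G,⊕,0) be a monoidal groupoid with no zero divisors and such that the only automorphism of the monoidal unit 0 is the identity. If [X,f] : A → B is an isomorphism in the bracket construction ⟨G,G⟩, then X ≅ 0 in G, and there is a unique morphism h : A → B in G with I(h) = [X,f]. -/

import Mathlib

open CategoryTheory MonoidalCategory

universe v u

variable (G : Type u) [Groupoid.{v} G] [MonoidalCategory G]

/-- A representative of a morphism `A ⟶ B` in Quillen's bracket construction `⟨G,G⟩`:
a pair `(X, f)` with `f : X ⊗ A ⟶ B`. -/
structure BracketHomRep (A B : G) : Type (max u v) where
  X : G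
  f : X ⊗ A ⟶ B

namespace BracketHomRep

variable {G}

/-- Two representatives `(X, f)` and `(X', f')` are equivalent iff there is an isomorphism
`g : X ≅ X'` with `f' ∘ (g ⊕ id_A) = f`. -/
def Rel {A B : G} (p q : BracketHomRep G A B) : Prop :=
  ∃ g : p.X ≅ q.X, (g.hom ⊗ₘ 𝟙 A) ≫ q.f = p.f

theorem rel_refl {A B : G} (p : BracketHomRep G A B) : Rel p p :=
  ⟨Iso.refl _, by simp⟩

theorem rel_symm {A B : G} {p q : BracketHomRep G A B} (h : Rel p q) : Rel q p := by
  obtain ⟨g, hg⟩ := h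
  refine ⟨g.symm, ?_⟩
  rw [← hg, ← Category.assoc, tensorHom_comp_tensorHom]
  simp

theorem rel_trans {A B : G} {p q r : BracketHomRep G A B} (h₁ : Rel p q) (h₂ : Rel q r) :
    Rel p r := by
  obtain ⟨g, hg⟩ := h₁
  obtain ⟨g', hg'⟩ := h₂
  refine ⟨g ≪≫ g', ?_⟩
  rw [← hg, ← hg', ← Category.assoc, tensorHom_comp_tensorHom]
  simp

instance setoid (A B : G) : Setoid (BracketHomRep G A B) where
  r := Rel
  iseqv := ⟨rel_refl, rel_symm, rel_trans⟩

/-- Composition of representatives: `[X,f] ≫ [Y,g] = [Y ⊗ X, g ∘ (id_Y ⊗ f) ∘ α]`. -/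
def comp {A B C : G} (p : BracketHomRep G A B) (q : BracketHomRep G B C) :
    BracketHomRep G A C :=
  ⟨q.X ⊗ p.X, (α_ q.X p.X A).hom ≫ (𝟙 q.X ⊗ₘ p.f) ≫ q.f⟩

theorem comp_rel {A B C : G} {p p' : BracketHomRep G A B} {q q' : BracketHomRep G B C}
    (hp : Rel p p') (hq : Rel q q') : Rel (p.comp q) (p'.comp q') := by
  obtain ⟨g, hg⟩ := hp
  obtain ⟨k, hk⟩ := hq
  refine ⟨k ⊗ᵢ g, ?_⟩
  dsimp [comp]
  rw [← hg, ← hk]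
  calc ((k.hom ⊗ₘ g.hom) ⊗ₘ 𝟙 A) ≫ (α_ q'.X p'.X A).hom ≫ (𝟙 q'.X ⊗ₘ p'.f) ≫ q'.f
      = (α_ q.X p.X A).hom ≫ (k.hom ⊗ₘ (g.hom ⊗ₘ 𝟙 A)) ≫ (𝟙 q'.X ⊗ₘ p'.f) ≫ q'.f := by
        rw [← Category.assoc, associator_naturality, Category.assoc]
    _ = (α_ q.X p.X A).hom ≫ (k.hom ⊗ₘ ((g.hom ⊗ₘ 𝟙 A) ≫ p'.f)) ≫ q'.f := by
        rw [← Category.assoc (k.hom ⊗ₘ (g.hom ⊗ₘ 𝟙 A)), tensorHom_comp_tensorHom, Category.comp_id]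
    _ = (α_ q.X p.X A).hom ≫ ((𝟙 q.X ⊗ₘ ((g.hom ⊗ₘ 𝟙 A) ≫ p'.f)) ≫ (k.hom ⊗ₘ 𝟙 B)) ≫ q'.f := by
        rw [id_tensor_comp_tensor_id]
    _ = (α_ q.X p.X A).hom ≫ (𝟙 q.X ⊗ₘ (g.hom ⊗ₘ 𝟙 A) ≫ p'.f) ≫ (k.hom ⊗ₘ 𝟙 B) ≫ q'.f := by
        simp only [Category.assoc]

end BracketHomRep

/-- Morphisms in Quillen's bracket construction: equivalence classes `[X,f]`. -/
def BracketHom (A B : G) : Type (max u v) := Quotient (BracketHomRep.setoid A B)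

/-- The morphism `[X, f] : A ⟶ B` of `⟨G,G⟩`. -/
def BracketHom.mk {A B : G} (X : G) (f : X ⊗ A ⟶ B) : BracketHom G A B :=
  Quotient.mk _ ⟨X, f⟩

/-- The identity `[0, λ_A]`. -/
def BracketHom.id (A : G) : BracketHom G A A := BracketHom.mk G (𝟙_ G) (λ_ A).hom

/-- Composition in the bracket construction. -/
def BracketHom.comp {A B C : G} : BracketHom G A B → BracketHom G B C → BracketHom G A C :=
  Quotient.map₂ BracketHomRep.comp (fun _ _ hp _ _ hq => BracketHomRep.comp_rel hp hq)

theorem BracketHom.id_comp {A B : G} (φ : BracketHom G A B) :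
    BracketHom.comp G (BracketHom.id G A) φ = φ := by
  obtain ⟨p⟩ := φ
  apply Quotient.sound
  refine ⟨ρ_ p.X, ?_⟩
  dsimp [BracketHomRep.comp]
  try simp only [MonoidalCategory.tensorHom_def]
  monoidal

theorem BracketHom.comp_id {A B : G} (φ : BracketHom G A B) :
    BracketHom.comp G φ (BracketHom.id G B) = φ := by
  obtain ⟨p⟩ := φ
  apply Quotient.sound
  refine ⟨λ_ p.X, ?_⟩
  dsimp [BracketHomRep.comp]
  try simp only [MonoidalCategory.tensorHom_def]
  monoidal

theorem BracketHom.assoc {A B C D : G} (φ : BracketHom G A B) (ψ : BracketHom G B C)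
    (χ : BracketHom G C D) : BracketHom.comp G (BracketHom.comp G φ ψ) χ = BracketHom.comp G φ (BracketHom.comp G ψ χ) := by
  obtain ⟨p⟩ := φ; obtain ⟨q⟩ := ψ; obtain ⟨r⟩ := χ
  apply Quotient.sound
  refine ⟨(α_ r.X q.X p.X).symm, ?_⟩
  dsimp [BracketHomRep.comp]
  try simp only [MonoidalCategory.tensorHom_def]
  monoidal

/-- Quillen's bracket construction `⟨G,G⟩` on the monoidal groupoid `G`: same objects as `G`. -/
def BracketCat : Type u := G

/-- The canonical identification of objects of `G` with objects of `⟨G,G⟩`. -/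
def BracketCat.of : G → BracketCat G := _root_.id

instance : Category.{max u v} (BracketCat G) where
  Hom A B := BracketHom G A B
  id A := BracketHom.id G A
  comp φ ψ := BracketHom.comp G φ ψ
  id_comp φ := BracketHom.id_comp G φ
  comp_id φ := BracketHom.comp_id G φ
  assoc φ ψ χ := BracketHom.assoc G φ ψ χ

/-- The canonical functor `I : G ⥤ ⟨G,G⟩`, identity on objects, sending `f : A ⟶ B`
to `[0, f ∘ λ_A]`. -/
def bracketFunctor : G ⥤ BracketCat G where
  obj := BracketCat.of G
  map {A B} f := show BracketHom G A B from BracketHom.mk G (𝟙_ G) ((λ_ A).hom ≫ f)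
  map_id A := by
    apply Quotient.sound
    exact ⟨Iso.refl _, by simp [BracketCat.of]⟩
  map_comp {A B C} f g := by
    apply Quotient.sound
    refine ⟨(λ_ (𝟙_ G)).symm, ?_⟩
    dsimp [BracketHomRep.comp]
    try simp only [MonoidalCategory.tensorHom_def]
    monoidal

/-! An inverse `[Y, g]` of `[X, f]` in `⟨G,G⟩` yields `Y ⊗ X ≅ 0`, so `X ≅ 0` as `G` has no zero
divisors, and an isomorphism `e : X ≅ 0` turns `[X, f]` into `I(f ∘ (e⁻¹ ⊗ id_A) ∘ λ_A⁻¹)`. Two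
morphisms `I(h) = I(h')` differ by an automorphism of `0`, which is trivial, so `I` is faithful. -/

variable {G}

namespace BracketHom

theorem mk_eq_mk_iff {A B X Y : G} (f : X ⊗ A ⟶ B) (g : Y ⊗ A ⟶ B) :
    mk G X f = mk G Y g ↔ ∃ e : X ≅ Y, (e.hom ⊗ₘ 𝟙 A) ≫ g = f :=
  Quotient.eq

theorem exists_tensor_iso_unit_of_comp_eq_id {A B X : G} (f : X ⊗ A ⟶ B)
    (φ : BracketHom G B A) (hφ : comp G (mk G X f) φ = BracketHom.id G A) :
    ∃ Y : G, Nonempty (Y ⊗ X ≅ 𝟙_ G) := by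
  obtain ⟨⟨Y, g⟩, rfl⟩ := Quotient.exists_rep φ
  obtain ⟨e, -⟩ := (mk_eq_mk_iff _ _).mp hφ
  exact ⟨Y, ⟨e⟩⟩

end BracketHom

theorem bracketFunctor_map_eq_mk {A B X : G} (e : X ≅ 𝟙_ G) (f : X ⊗ A ⟶ B) :
    (bracketFunctor G).map ((λ_ A).inv ≫ (e.inv ⊗ₘ 𝟙 A) ≫ f) = BracketHom.mk G X f :=
  (BracketHom.mk_eq_mk_iff _ _).mpr ⟨e.symm, by simp⟩

theorem bracketFunctor_faithful (h0 : ∀ g : 𝟙_ G ⟶ 𝟙_ G, g = 𝟙 (𝟙_ G)) :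
    (bracketFunctor G).Faithful where
  map_injective {A _} h h' hh' := by
    obtain ⟨u, hu⟩ := (BracketHom.mk_eq_mk_iff _ _).mp hh'
    rw [h0 u.hom, id_tensorHom_id, Category.id_comp] at hu
    exact ((Iso.cancel_iso_hom_left (λ_ A) _ _).mp hu).symm

/-- Suppose the monoidal groupoid `G` has no zero divisors and the only
automorphism of the monoidal unit `0` is the identity.  If `[X,f] : A ⟶ B` is an isomorphism
of the bracket construction `⟨G,G⟩`, then `X ≅ 0` in `G`, and there is a unique morphism
`h : A ⟶ B` of `G` with `I(h) = [X,f]`. -/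
theorem bracket_iso_of_unit (G : Type u) [Groupoid.{v} G] [MonoidalCategory G]
    (hzd : ∀ C C' : G, Nonempty (C ⊗ C' ≅ 𝟙_ G) →
      Nonempty (C ≅ 𝟙_ G) ∧ Nonempty (C' ≅ 𝟙_ G))
    (h0 : ∀ g : (𝟙_ G) ⟶ (𝟙_ G), g = 𝟙 (𝟙_ G))
    {A B : G} (X : G) (f : X ⊗ A ⟶ B)
    (hiso : IsIso (show BracketCat.of G A ⟶ BracketCat.of G B from BracketHom.mk G X f)) :
    Nonempty (X ≅ 𝟙_ G) ∧
      ∃! h : A ⟶ B, (bracketFunctor G).map h = BracketHom.mk G X f := by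
  obtain ⟨φ, hφ, -⟩ := hiso
  obtain ⟨Y, hY⟩ := BracketHom.exists_tensor_iso_unit_of_comp_eq_id f φ hφ
  obtain ⟨-, ⟨e⟩⟩ := hzd Y X hY
  have := bracketFunctor_faithful h0
  refine ⟨⟨e⟩, _, bracketFunctor_map_eq_mk e f, fun h hh => ?_⟩
  exact (bracketFunctor G).map_injective (hh.trans (bracketFunctor_map_eq_mk e f).symm)
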